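/- Lucas-derivative of the binomial exponential: for α, β, u, v ∈ ℂ define E_{α,β}(x) = Σ_{n=0}^{∞} (α ⊕_{u,v} β)^{(n)}·xⁿ/{n}_{s,t}!. Assume the series defining E_{α,β}(w), E_{αu,βφ}(w) and E_{αφ',βv}(w) converge absolutely for all w ∈ ℂ. Then for every x ≠ 0, (D_{s,t}E_{α,β})(x) = α·E_{αu,βφ}(x) + β·E_{αφ',βv}(x). In particular, when u = φ and v = φ', the function f = E_{α,β} satisfies the proportional functional equation (D_{s,t}f)(x) = α·f(φx) + β·f(φ'x) for all x ≠ 0. -/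

import Mathlib

open scoped BigOperators

noncomputable section

/-- The Lucas sequence `{n}_{s,t}`. -/
def lucasSeq (s t : ℂ) : ℕ → ℂ
  | 0 => 0
  | 1 => 1
  | n + 2 => s * lucasSeq s t (n + 1) + t * lucasSeq s t n

/-- The Lucastorial `{n}_{s,t}!`. -/
def lucasFact (s t : ℂ) : ℕ → ℂ
  | 0 => 1
  | n + 1 => lucasFact s t n * lucasSeq s t (n + 1)

/-- The Lucasnomial coefficient `{n choose k}_{s,t}`. -/
def lucasBinom (s t : ℂ) (n k : ℕ) : ℂ :=
  lucasFact s t n / (lucasFact s t k * lucasFact s t (n - k))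

/-- The `(u,v)`-deformed Lucasnomial power `(x ⊕_{u,v} y)^{(n)}`. -/
def lucasPow (s t u v x y : ℂ) (n : ℕ) : ℂ :=
  ∑ k ∈ Finset.range (n + 1),
    lucasBinom s t n k * u ^ ((n - k).choose 2) * v ^ (k.choose 2) * x ^ (n - k) * y ^ k

/-- The Lucas-derivative with respect to the roots `p = φ`, `q = φ'`. -/
def lucasDeriv (p q : ℂ) (f : ℂ → ℂ) (x : ℂ) : ℂ :=
  (f (p * x) - f (q * x)) / ((p - q) * x)

/-- The Lucas-derivative, extended by `0` at `0`, as an operator suitable for iteration. -/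
def lucasDeriv0 (p q : ℂ) (f : ℂ → ℂ) : ℂ → ℂ :=
  fun x => if x = 0 then 0 else (f (p * x) - f (q * x)) / ((p - q) * x)

/-- The Lucas-Pantograph exponential `exp_{s,t}(z,u)`. -/
def lucasExp (s t u z : ℂ) : ℂ :=
  ∑' n : ℕ, u ^ (n.choose 2) * z ^ n / lucasFact s t n

/-- The Lucas-Pantograph sine `sin_{s,t}(z,u)`. -/
def lucasSin (s t u z : ℂ) : ℂ :=
  ∑' n : ℕ, (-1 : ℂ) ^ n * u ^ ((2 * n + 1).choose 2) * z ^ (2 * n + 1) / lucasFact s t (2 * n + 1)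

/-- The Lucas-Pantograph cosine `cos_{s,t}(z,u)`. -/
def lucasCos (s t u z : ℂ) : ℂ :=
  ∑' n : ℕ, (-1 : ℂ) ^ n * u ^ ((2 * n).choose 2) * z ^ (2 * n) / lucasFact s t (2 * n)

/-- The binomial exponential `E_{α,β}(x) = Σ (α ⊕_{u,v} β)^{(n)} xⁿ/{n}!`. -/
def binLucasExp (s t u v α β x : ℂ) : ℂ :=
  ∑' n : ℕ, lucasPow s t u v α β n * x ^ n / lucasFact s t n

/-!
Write `E_{α,β}(x) = Σ cₙ xⁿ / {n}!` with `cₙ = (α ⊕_{u,v} β)^{(n)}`. By Binet's formula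
`(φ - φ') {n} = φⁿ - φ'ⁿ`, the Lucas-derivative shifts coefficients:
`D (Σ cₙ xⁿ / {n}!) = Σ cₙ₊₁ xⁿ / {n}!`. So everything reduces to the recurrence
`(α ⊕ β)^{(n+1)} = α (αu ⊕ βφ)^{(n)} + β (αφ' ⊕ βv)^{(n)}`. Divided by `{n}!`, the deformed
power is the Cauchy product of `u^{C(i,2)} αⁱ / {i}!` and `v^{C(j,2)} βʲ / {j}!`; splitting
`{i + j} = φʲ {i} + φ'ⁱ {j}` and letting `{i}` (resp. `{j}`) lower the index of its own factor gives
the two halves of the recurrence.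
-/

open Finset

theorem lucasFact_succ (s t : ℂ) (n : ℕ) :
    lucasFact s t (n + 1) = lucasFact s t n * lucasSeq s t (n + 1) := rfl

theorem lucasFact_ne_zero {s t : ℂ} (hL : ∀ n : ℕ, 1 ≤ n → lucasSeq s t n ≠ 0) (n : ℕ) :
    lucasFact s t n ≠ 0 := by
  induction n with
  | zero => exact one_ne_zero
  | succ n ih => exact mul_ne_zero ih (hL (n + 1) n.succ_pos)

def lucasExpCoeff (s t u x : ℂ) (n : ℕ) : ℂ :=
  u ^ n.choose 2 * x ^ n / lucasFact s t n

theorem lucasExpCoeff_mul_pow (s t u x c : ℂ) (n : ℕ) :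
    lucasExpCoeff s t u x n * c ^ n = lucasExpCoeff s t u (x * c) n := by
  rw [lucasExpCoeff, lucasExpCoeff, mul_pow]
  ring

theorem lucasExpCoeff_succ_mul_lucasSeq {s t : ℂ} (u x : ℂ) {n : ℕ}
    (hn : lucasSeq s t (n + 1) ≠ 0) :
    lucasExpCoeff s t u x (n + 1) * lucasSeq s t (n + 1) = x * lucasExpCoeff s t u (x * u) n := by
  rw [lucasExpCoeff, lucasExpCoeff, lucasFact_succ, Nat.choose_succ_succ', Nat.choose_one_right]
  field_simp
  ring

theorem lucasPow_div_lucasFact {s t : ℂ} (u v x y : ℂ) {n : ℕ} (hn : lucasFact s t n ≠ 0) :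
    lucasPow s t u v x y n / lucasFact s t n =
      ∑ ij ∈ antidiagonal n, lucasExpCoeff s t u x ij.1 * lucasExpCoeff s t v y ij.2 := by
  rw [← Nat.sum_antidiagonal_swap, Nat.sum_antidiagonal_eq_sum_range_succ_mk, lucasPow, sum_div]
  refine sum_congr rfl fun k _ => ?_
  simp only [Prod.swap_prod_mk, lucasExpCoeff, lucasBinom]
  field_simp

theorem lucasPow_mul_mul (s t u v x y c : ℂ) (n : ℕ) :
    lucasPow s t u v (x * c) (y * c) n = c ^ n * lucasPow s t u v x y n := by
  rw [lucasPow, lucasPow, mul_sum]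
  refine sum_congr rfl fun k hk => ?_
  rw [mul_pow, mul_pow, ← Nat.sub_add_cancel (Nat.lt_succ_iff.mp (mem_range.mp hk)), pow_add,
    Nat.add_sub_cancel]
  ring

theorem binLucasExp_mul_mul (s t u v x y c w : ℂ) :
    binLucasExp s t u v (x * c) (y * c) w = binLucasExp s t u v x y (c * w) := by
  refine tsum_congr fun n => ?_
  rw [lucasPow_mul_mul, mul_pow]
  ring

section LucasRoots

variable {s t p q : ℂ}

theorem sub_mul_lucasSeq (hs : p + q = s) (ht : p * q = -t) (n : ℕ) :
    (p - q) * lucasSeq s t n = p ^ n - q ^ n := by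
  induction n using Nat.twoStepInduction with
  | zero => simp [lucasSeq]
  | one => simp [lucasSeq]
  | more n ih₀ ih₁ =>
    rw [lucasSeq]
    linear_combination s * ih₁ + t * ih₀ - (p ^ (n + 1) - q ^ (n + 1)) * hs
      + (p ^ n - q ^ n) * ht

theorem lucasSeq_add (hs : p + q = s) (ht : p * q = -t) (hpq : p ≠ q) (m n : ℕ) :
    lucasSeq s t (m + n) = p ^ n * lucasSeq s t m + q ^ m * lucasSeq s t n := by
  refine mul_left_cancel₀ (sub_ne_zero.mpr hpq) ?_
  linear_combination sub_mul_lucasSeq hs ht (m + n) - p ^ n * sub_mul_lucasSeq hs ht m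
    - q ^ m * sub_mul_lucasSeq hs ht n

theorem lucasPow_succ (hs : p + q = s) (ht : p * q = -t) (hpq : p ≠ q)
    (hL : ∀ n : ℕ, 1 ≤ n → lucasSeq s t n ≠ 0) (u v x y : ℂ) (n : ℕ) :
    lucasPow s t u v x y (n + 1) =
      x * lucasPow s t u v (x * u) (y * p) n + y * lucasPow s t u v (x * q) (y * v) n := by
  have hF := lucasFact_ne_zero hL
  have hL' : ∀ k, lucasSeq s t (k + 1) ≠ 0 := fun k => hL (k + 1) k.succ_pos
  set a := lucasExpCoeff s t u
  set b := lucasExpCoeff s t v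
  suffices h : lucasPow s t u v x y (n + 1) / lucasFact s t (n + 1) * lucasSeq s t (n + 1) =
      x * (lucasPow s t u v (x * u) (y * p) n / lucasFact s t n) +
        y * (lucasPow s t u v (x * q) (y * v) n / lucasFact s t n) by
    rw [lucasFact_succ] at h
    field_simp [hF n, hL' n] at h
    linear_combination h
  have hsplit : ∀ ij ∈ antidiagonal (n + 1), a x ij.1 * b y ij.2 * lucasSeq s t (n + 1) =
      a x ij.1 * lucasSeq s t ij.1 * (b y ij.2 * p ^ ij.2) +
        a x ij.1 * q ^ ij.1 * (b y ij.2 * lucasSeq s t ij.2) := by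
    intro ij hij
    rw [← mem_antidiagonal.mp hij, lucasSeq_add hs ht hpq]
    ring
  rw [lucasPow_div_lucasFact _ _ _ _ (hF _), lucasPow_div_lucasFact _ _ _ _ (hF _),
    lucasPow_div_lucasFact _ _ _ _ (hF _), sum_mul, sum_congr rfl hsplit, sum_add_distrib,
    Nat.sum_antidiagonal_succ, Nat.sum_antidiagonal_succ', mul_sum, mul_sum]
  simp only [lucasSeq, mul_zero, zero_mul, zero_add, lucasExpCoeff_succ_mul_lucasSeq _ _ (hL' _),
    lucasExpCoeff_mul_pow, a, b]
  congr 1 <;> refine sum_congr rfl fun ij _ => by ring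

theorem lucasDeriv_tsum_div_lucasFact (hs : p + q = s) (ht : p * q = -t)
    (hpq : p ≠ q) (hL : ∀ n : ℕ, 1 ≤ n → lucasSeq s t n ≠ 0) (a : ℕ → ℂ) {x : ℂ} (hx : x ≠ 0)
    (hp : Summable fun n => a n * (p * x) ^ n / lucasFact s t n)
    (hq : Summable fun n => a n * (q * x) ^ n / lucasFact s t n) :
    lucasDeriv p q (fun w => ∑' n, a n * w ^ n / lucasFact s t n) x =
      ∑' n, a (n + 1) * x ^ n / lucasFact s t n := by
  have hsub := (hp.sub hq).div_const ((p - q) * x)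
  rw [lucasDeriv, ← hp.tsum_sub hq, ← tsum_div_const, hsub.tsum_eq_zero_add]
  simp only [pow_zero, sub_self, zero_div, zero_add]
  refine tsum_congr fun n => ?_
  have hLn := hL (n + 1) n.succ_pos
  have hbinet := sub_mul_lucasSeq hs ht (n + 1)
  rw [lucasFact_succ]
  field_simp [sub_ne_zero.mpr hpq, lucasFact_ne_zero hL n]
  linear_combination -(a (n + 1) * x ^ (n + 1)) * hbinet

end LucasRoots

theorem lucasDeriv_binLucasExp_general (s t : ℂ)
    (hst : s ^ 2 + 4 * t ≠ 0) (hL : ∀ n : ℕ, 1 ≤ n → lucasSeq s t n ≠ 0)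
    (d : ℂ) (hd : d ^ 2 = s ^ 2 + 4 * t) (α β u v : ℂ)
    (h1 : ∀ w : ℂ, Summable fun n : ℕ =>
      ‖lucasPow s t u v α β n * w ^ n / lucasFact s t n‖)
    (h2 : ∀ w : ℂ, Summable fun n : ℕ =>
      ‖lucasPow s t u v (α * u) (β * ((s + d) / 2)) n * w ^ n / lucasFact s t n‖)
    (h3 : ∀ w : ℂ, Summable fun n : ℕ =>
      ‖lucasPow s t u v (α * ((s - d) / 2)) (β * v) n * w ^ n / lucasFact s t n‖) :
    (∀ x : ℂ, x ≠ 0 →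
      lucasDeriv ((s + d) / 2) ((s - d) / 2) (binLucasExp s t u v α β) x =
        α * binLucasExp s t u v (α * u) (β * ((s + d) / 2)) x +
          β * binLucasExp s t u v (α * ((s - d) / 2)) (β * v) x) ∧
    (u = (s + d) / 2 → v = (s - d) / 2 → ∀ x : ℂ, x ≠ 0 →
      lucasDeriv ((s + d) / 2) ((s - d) / 2) (binLucasExp s t u v α β) x =
        α * binLucasExp s t u v α β (((s + d) / 2) * x) +
          β * binLucasExp s t u v α β (((s - d) / 2) * x)) := by
  have hsum : (s + d) / 2 + (s - d) / 2 = s := by ring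
  have hprod : (s + d) / 2 * ((s - d) / 2) = -t := by linear_combination (-1 / 4 : ℂ) * hd
  have hroots : (s + d) / 2 ≠ (s - d) / 2 := by
    intro h
    obtain rfl : d = 0 := by linear_combination h
    exact hst (by rw [← hd]; ring)
  have hderiv : ∀ x : ℂ, x ≠ 0 →
      lucasDeriv ((s + d) / 2) ((s - d) / 2) (binLucasExp s t u v α β) x =
        α * binLucasExp s t u v (α * u) (β * ((s + d) / 2)) x +
          β * binLucasExp s t u v (α * ((s - d) / 2)) (β * v) x := by
    intro x hx
    refine (lucasDeriv_tsum_div_lucasFact hsum hprod hroots hL _ hx (h1 _).of_norm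
      (h1 _).of_norm).trans ?_
    rw [binLucasExp, binLucasExp, ← tsum_mul_left, ← tsum_mul_left,
      ← ((h2 x).of_norm.mul_left α).tsum_add ((h3 x).of_norm.mul_left β)]
    refine tsum_congr fun n => ?_
    rw [lucasPow_succ hsum hprod hroots hL]
    ring
  refine ⟨hderiv, fun hu hv x hx => ?_⟩
  subst hu hv
  rw [hderiv x hx, binLucasExp_mul_mul, binLucasExp_mul_mul]

/-- Lucas-derivative of the binomial exponential, where `φ = (s+d)/2`, `φ' = (s-d)/2`
with `d` a square root of `s²+4t ≠ 0`. -/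
theorem lucasDeriv_binLucasExp (s t : ℂ) (hs : s ≠ 0) (ht : t ≠ 0)
    (hst : s ^ 2 + 4 * t ≠ 0) (hL : ∀ n : ℕ, 1 ≤ n → lucasSeq s t n ≠ 0)
    (d : ℂ) (hd : d ^ 2 = s ^ 2 + 4 * t) (α β u v : ℂ)
    (h1 : ∀ w : ℂ, Summable fun n : ℕ =>
      ‖lucasPow s t u v α β n * w ^ n / lucasFact s t n‖)
    (h2 : ∀ w : ℂ, Summable fun n : ℕ =>
      ‖lucasPow s t u v (α * u) (β * ((s + d) / 2)) n * w ^ n / lucasFact s t n‖)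
    (h3 : ∀ w : ℂ, Summable fun n : ℕ =>
      ‖lucasPow s t u v (α * ((s - d) / 2)) (β * v) n * w ^ n / lucasFact s t n‖) :
    (∀ x : ℂ, x ≠ 0 →
      lucasDeriv ((s + d) / 2) ((s - d) / 2) (binLucasExp s t u v α β) x =
        α * binLucasExp s t u v (α * u) (β * ((s + d) / 2)) x +
          β * binLucasExp s t u v (α * ((s - d) / 2)) (β * v) x) ∧
    (u = (s + d) / 2 → v = (s - d) / 2 → ∀ x : ℂ, x ≠ 0 →
      lucasDeriv ((s + d) / 2) ((s - d) / 2) (binLucasExp s t u v α β) x =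
        α * binLucasExp s t u v α β (((s + d) / 2) * x) +
          β * binLucasExp s t u v α β (((s - d) / 2) * x)) :=
  lucasDeriv_binLucasExp_general s t hst hL d hd α β u v h1 h2 h3
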